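/- arXiv:1805.04769 — 2 statements merged into one kernel-verified Lean document; each statement's English description precedes it below -/
import Mathlib

section
/- For an irrational rotation T_α with α > k/l such that k/l is an even-index convergent p_m/q_m of α, the first point of the orbit of x under T_α that belongs to the arc [x, T_α^l(x)] has the form T_α^{Nl - r}(x) with N = a_{m+1} + 2, where r ∈ (0,l) satisfies kr ≡ 1 (mod l). -/
/-!
Let `k / l = p_m / q_m` and `P / Q = p_{m+1} / q_{m+1}` be consecutive convergents of `α` and
`s = l α - k`, `t = P - Q α` their errors. Since `m` is even, `0 < t < s < 1`, and `l P - k Q = 1`.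
The unimodular change of variables `j = x l + y Q` turns `j α - p` into `x s - y t`, so a return
`j α ∈ (0, s) mod 1` with `j > 0` forces `x, y ≥ 1`, i.e. `j ≥ l + Q`, while `j = l + Q` lands at
`s - t`. Finally `q_{m-1} ≡ -k⁻¹ ≡ -r (mod l)` gives `q_{m-1} = l - r`, whence
`Q + l = a_{m+1} l + q_{m-1} + l = (a_{m+1} + 2) l - r`.
-/

open GenContFract
open GenContFract (of)

theorem add_eq_of_mul_sub_mul_eq_one_of_modEq {a b k l r : ℤ} (hdet : a * l - b * k = 1)
    (hkr : k * r ≡ 1 [ZMOD l]) (hb : 0 ≤ b) (hbl : b < l) (hr : 0 < r) (hrl : r < l) :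
    b + r = l := by
  obtain ⟨c, hc⟩ : l ∣ b + r := by
    obtain ⟨d, hd⟩ := hkr.dvd
    exact ⟨b * d + r * a, by linear_combination b * hd - r * hdet⟩
  obtain rfl : c = 1 := by
    have h0 : 0 < c := pos_of_mul_pos_right (hc ▸ (by omega : 0 < b + r)) (by omega)
    have h2 : c < 2 := lt_of_mul_lt_mul_left (hc ▸ (by omega : b + r < l * 2)) (by omega)
    omega
  simpa using hc

namespace GenContFract

section

variable {K : Type*} [Field K] [LinearOrder K] [FloorRing K] {v : K} {n : ℕ}

theorem exists_int_eq_of_contsAux (v : K) (n : ℕ) :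
    ∃ a b : ℤ, (of v).contsAux n = ⟨a, b⟩ := by
  induction n using Nat.twoStepInduction with
  | zero => exact ⟨1, 0, by simp [contsAux]⟩
  | one => exact ⟨⌊v⌋, 1, by simp [contsAux, of_h_eq_floor]⟩
  | more n ih₀ ih₁ =>
    obtain ⟨a₀, b₀, h₀⟩ := ih₀
    obtain ⟨a₁, b₁, h₁⟩ := ih₁
    cases hs : (of v).s.get? n with
    | none => exact ⟨a₁, b₁, (contsAux_stable_step_of_terminated hs).trans h₁⟩
    | some gp =>
      obtain ⟨ha, z, hz⟩ := of_partNum_eq_one_and_exists_int_partDen_eq hs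
      refine ⟨z * a₁ + a₀, z * b₁ + b₀, ?_⟩
      rw [contsAux_recurrence hs h₀ h₁, ha, hz]
      push_cast
      ring_nf

theorem exists_int_eq_of_nums (v : K) (n : ℕ) : ∃ a : ℤ, (of v).nums n = a :=
  let ⟨a, _, h⟩ := exists_int_eq_of_contsAux v (n + 1)
  ⟨a, by rw [num_eq_conts_a, nth_cont_eq_succ_nth_contAux, h]⟩

theorem exists_int_eq_of_dens (v : K) (n : ℕ) : ∃ b : ℤ, (of v).dens n = b :=
  let ⟨_, b, h⟩ := exists_int_eq_of_contsAux v (n + 1)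
  ⟨b, by rw [den_eq_conts_b, nth_cont_eq_succ_nth_contAux, h]⟩

theorem of_dens_recurrence {b : K} (h : (of v).partDens.get? (n + 1) = some b) :
    (of v).dens (n + 2) = b * (of v).dens (n + 1) + (of v).dens n := by
  obtain ⟨gp, hs, rfl⟩ := exists_s_b_of_partDen h
  rw [dens_recurrence hs rfl rfl, of_partNum_eq_one (partNum_eq_s_a hs), one_mul]

theorem of_determinant (h : ¬(of v).TerminatedAt n) :
    (of v).nums n * (of v).dens (n + 1) - (of v).dens n * (of v).nums (n + 1) = (-1) ^ (n + 1) :=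
  SimpContFract.determinant (s := SimpContFract.of v) h

variable [IsStrictOrderedRing K]

theorem one_le_of_dens (v : K) (n : ℕ) : 1 ≤ (of v).dens n := by
  induction n with
  | zero => simp
  | succ n ih => exact ih.trans of_den_mono

theorem of_dens_add_dens_succ_le (h : ¬(of v).TerminatedAt (n + 1)) :
    (of v).dens n + (of v).dens (n + 1) ≤ (of v).dens (n + 2) := by
  obtain ⟨b, hb⟩ := Option.ne_none_iff_exists'.mp (mt terminatedAt_iff_partDen_none.mpr h)
  rw [of_dens_recurrence hb]
  nlinarith [of_one_le_get?_partDen hb, one_le_of_dens v (n + 1)]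

end

variable {α : ℝ} (hα : Irrational α) (n : ℕ)
include hα

theorem of_not_terminatedAt_of_irrational : ¬(of α).TerminatedAt n := fun h ↦ hα <| by
  obtain ⟨q, hq⟩ := (terminates_iff_rat α).mp ⟨n, h⟩
  exact ⟨q, hq.symm⟩

theorem abs_dens_mul_sub_nums_lt_of_irrational :
    |(of α).dens n * α - (of α).nums n| < 1 / (of α).dens (n + 1) := by
  have hq₀ : 0 < (of α).dens n := one_pos.trans_le (one_le_of_dens α n)
  have hq₁ : 0 < (of α).dens (n + 1) := one_pos.trans_le (one_le_of_dens α (n + 1))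
  have hle : |(of α).dens n * α - (of α).nums n| ≤ 1 / (of α).dens (n + 1) := by
    have h := abs_sub_convs_le (of_not_terminatedAt_of_irrational hα n)
    rw [conv_eq_num_div_den] at h
    calc |(of α).dens n * α - (of α).nums n|
        = (of α).dens n * |α - (of α).nums n / (of α).dens n| := by
          rw [← abs_of_pos hq₀, ← abs_mul, abs_of_pos hq₀]
          field_simp
      _ ≤ (of α).dens n * (1 / ((of α).dens n * (of α).dens (n + 1))) := by gcongr
      _ = 1 / (of α).dens (n + 1) := by field_simp
  -- Equality would make the irrational number `q₁ (q₀ α - p₀)` equal to `±1`.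
  refine hle.lt_of_ne fun heq ↦ ?_
  obtain ⟨a, ha⟩ := exists_int_eq_of_nums α n
  obtain ⟨b, hb⟩ := exists_int_eq_of_dens α n
  obtain ⟨c, hc⟩ := exists_int_eq_of_dens α (n + 1)
  rw [ha, hb, hc] at heq
  rw [hb] at hq₀
  rw [hc] at hq₁
  have hirr : Irrational (c * (b * α - a)) :=
    ((hα.intCast_mul (by exact_mod_cast hq₀.ne')).sub_intCast a).intCast_mul
      (by exact_mod_cast hq₁.ne')
  have h1 : |(c : ℝ) * (b * α - a)| = 1 := by
    rw [abs_mul, heq, abs_of_pos hq₁]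
    field_simp
  rcases (abs_eq zero_le_one).mp h1 with h | h
  · exact hirr.ne_int 1 (by rw [h]; simp)
  · exact hirr.ne_int (-1) (by rw [h]; simp)

/-- The errors `s = q₀ α - p₀` and `t = p₁ - q₁ α` of consecutive convergents satisfy
`q₁ s + q₀ t = 1`; together with `|s| < 1 / q₁` and `|t| < 1 / q₂ ≤ 1 / (q₀ + q₁)` this pins down
their signs and shows `t < s`. -/
theorem of_nums_succ_sub_pos_lt_dens_mul_sub_lt_one_of_even (hn : Even n) :
    0 < (of α).nums (n + 1) - (of α).dens (n + 1) * α ∧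
      (of α).nums (n + 1) - (of α).dens (n + 1) * α < (of α).dens n * α - (of α).nums n ∧
      (of α).dens n * α - (of α).nums n < 1 := by
  set q₀ := (of α).dens n
  set q₁ := (of α).dens (n + 1)
  set q₂ := (of α).dens (n + 2)
  set s := q₀ * α - (of α).nums n
  set t := (of α).nums (n + 1) - q₁ * α
  have hdet : q₁ * s + q₀ * t = 1 := by
    have h := of_determinant (of_not_terminatedAt_of_irrational hα n)
    rw [hn.add_one.neg_one_pow] at h
    linear_combination -h
  have hq₀ := one_le_of_dens α n
  have hq₁ := one_le_of_dens α (n + 1)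
  have hq₂ : q₀ + q₁ ≤ q₂ :=
    of_dens_add_dens_succ_le (of_not_terminatedAt_of_irrational hα (n + 1))
  have hs : |s| * q₁ < 1 :=
    (lt_div_iff₀ (by linarith)).mp (by simpa using abs_dens_mul_sub_nums_lt_of_irrational hα n)
  have ht : |t| * q₂ < 1 := by
    have h := abs_dens_mul_sub_nums_lt_of_irrational hα (n + 1)
    rw [← abs_neg, lt_div_iff₀ (by linarith)] at h
    simpa [t] using h
  have ht₀ : 0 < t := by
    by_contra! h
    nlinarith [le_abs_self s]
  rw [abs_of_pos ht₀] at ht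
  have hts : t < s := by nlinarith
  exact ⟨ht₀, hts, by nlinarith⟩

theorem of_dens_add_eq_of_modEq (hn : Odd n) {k l r : ℕ} (hk : (of α).nums (n + 1) = k)
    (hl : (of α).dens (n + 1) = l) (hkr : k * r ≡ 1 [MOD l]) (hr : 0 < r) (hrl : r < l) :
    (of α).dens n + r = l := by
  obtain ⟨a, ha⟩ := exists_int_eq_of_nums α n
  obtain ⟨b, hb⟩ := exists_int_eq_of_dens α n
  have hdet := of_determinant (of_not_terminatedAt_of_irrational hα n)
  rw [hn.add_one.neg_one_pow, ha, hb, hk, hl] at hdet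
  have hb₀ : (0 : ℝ) ≤ b := hb ▸ zero_le_one.trans (one_le_of_dens α n)
  have hbl : (b : ℝ) < l := by
    obtain ⟨n, rfl⟩ : ∃ n', n = n' + 1 := ⟨n - 1, by obtain ⟨c, rfl⟩ := hn; omega⟩
    have := of_dens_add_dens_succ_le (of_not_terminatedAt_of_irrational hα (n + 1))
    linarith [one_le_of_dens α n]
  rw [hb]
  exact_mod_cast add_eq_of_mul_sub_mul_eq_one_of_modEq (a := a) (b := b) (k := k) (l := l)
    (by exact_mod_cast hdet) (Int.natCast_modEq_iff.mpr hkr) (by exact_mod_cast hb₀)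
    (by exact_mod_cast hbl) (by exact_mod_cast hr) (by exact_mod_cast hrl)

end GenContFract

section FirstReturn

variable {α : ℝ} {l Q : ℕ} {k P : ℤ}

/-- With `s = l α - k` and `t = P - Q α`, the unimodular change of variables
`x = j P - p Q`, `y = p l - j k` gives `j = x l + y Q` and `j α - p = x s - y t`. -/
theorem mul_sub_notMem_Ioo_of_lt_add (hdet : l * P - k * Q = (1 : ℤ)) (ht : 0 < P - Q * α)
    {j p : ℤ} (hj : 0 < j) (hjlt : j < l + Q) : j * α - p ∉ Set.Ioo 0 (l * α - k) := by
  rintro ⟨hpos, hlt⟩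
  set x := j * P - p * Q
  set y := p * l - j * k
  have hdetℝ : (l : ℝ) * P - k * Q = 1 := by exact_mod_cast hdet
  have hj' : j = x * l + y * Q := by linear_combination -j * hdet
  have hjα : j * α - p = x * (l * α - k) - y * (P - Q * α) := by
    simp only [x, y]; push_cast; linear_combination (-(j * α) + p) * hdetℝ
  rcases le_or_gt y 0 with hy | hy
  · have hx : x ≤ 0 := by
      have : (x : ℝ) < 1 := by
        by_contra! h
        nlinarith [(Int.cast_nonpos (R := ℝ)).mpr hy]
      exact_mod_cast Int.lt_add_one_iff.mp (by exact_mod_cast this)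
    nlinarith
  · have hx : 0 < x := by
      have : (0 : ℝ) < x := by
        by_contra! h
        nlinarith [(Int.cast_pos (R := ℝ)).mpr hy]
      exact_mod_cast this
    nlinarith

theorem first_return_fract_mul_of_mul_sub_mul_eq_one (hdet : l * P - k * Q = (1 : ℤ))
    (ht : 0 < P - Q * α) (hts : P - Q * α < l * α - k) (hs : l * α - k < 1) :
    (0 < Int.fract (((Q + l : ℕ) : ℝ) * α) ∧
      Int.fract (((Q + l : ℕ) : ℝ) * α) < Int.fract ((l : ℝ) * α)) ∧
    ∀ j : ℕ, 0 < j → j < Q + l →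
      ¬(0 < Int.fract ((j : ℝ) * α) ∧ Int.fract ((j : ℝ) * α) < Int.fract ((l : ℝ) * α)) := by
  have hfl : Int.fract ((l : ℝ) * α) = l * α - k := by
    rw [Int.fract_eq_iff]
    exact ⟨by linarith, hs, k, by ring⟩
  have hfQl : Int.fract (((Q + l : ℕ) : ℝ) * α) = (l * α - k) - (P - Q * α) := by
    rw [Int.fract_eq_iff]
    exact ⟨by linarith, by linarith, P + k, by push_cast; ring⟩
  refine ⟨by rw [hfQl, hfl]; constructor <;> linarith, fun j hj hjlt ↦ ?_⟩
  rw [hfl, Int.fract]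
  exact_mod_cast mul_sub_notMem_Ioo_of_lt_add hdet ht (p := ⌊(j : ℝ) * α⌋)
    (by exact_mod_cast hj) (by omega)

end FirstReturn

theorem stmt7_general (α : ℝ) (hirr : Irrational α)
    (m : ℕ) (hmeven : Even m) (k l r aN N : ℕ)
    (hql : ((l : ℝ)) = (GenContFract.of α).dens m)
    (hconv : (GenContFract.of α).convs m = (k : ℝ) / l)
    (ha : (GenContFract.of α).partDens.get? m = some (aN : ℝ))
    (hr : 0 < r) (hrl : r < l) (hmod : (k * r) % l = 1 % l)
    (hN : N = aN + 2) :
    (0 < Int.fract (((N * l - r : ℕ) : ℝ) * α) ∧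
      Int.fract (((N * l - r : ℕ) : ℝ) * α) < Int.fract ((l : ℝ) * α)) ∧
    ∀ j : ℕ, 0 < j → j < N * l - r →
      ¬ (0 < Int.fract ((j : ℝ) * α) ∧ Int.fract ((j : ℝ) * α) < Int.fract ((l : ℝ) * α)) := by
  obtain ⟨n, rfl⟩ : ∃ n, m = n + 1 := by
    refine ⟨m - 1, (Nat.succ_pred_eq_of_ne_zero fun hm ↦ ?_).symm⟩
    subst hm
    have : l = 1 := by exact_mod_cast hql.trans zeroth_den_eq_one
    omega
  have hl : (0 : ℝ) < l := by exact_mod_cast hr.trans hrl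
  have hk : (of α).nums (n + 1) = k := by
    rwa [conv_eq_num_div_den, ← hql, div_left_inj' hl.ne'] at hconv
  have hodd : Odd n := Nat.not_even_iff_odd.mp (Nat.even_add_one.mp hmeven)
  have hprev := of_dens_add_eq_of_modEq hirr n hodd hk hql.symm hmod hr hrl
  have hQ : (of α).dens (n + 2) = (aN * l + (l - r) : ℕ) := by
    rw [of_dens_recurrence ha, ← hql]
    push_cast [Nat.cast_sub hrl.le]
    linear_combination hprev
  obtain ⟨P, hP⟩ := exists_int_eq_of_nums α (n + 2)
  have hdet := of_determinant (of_not_terminatedAt_of_irrational hirr (n + 1))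
  obtain ⟨ht, hts, hs⟩ :=
    of_nums_succ_sub_pos_lt_dens_mul_sub_lt_one_of_even hirr (n + 1) hmeven
  rw [hmeven.add_one.neg_one_pow] at hdet
  simp only [hQ, hP, hk, ← hql] at hdet ht hts hs
  have hdetℤ : (l : ℤ) * P - k * ((aN * l + (l - r) : ℕ) : ℤ) = 1 := by
    exact_mod_cast (by linarith : (l : ℝ) * P - k * ((aN * l + (l - r) : ℕ) : ℝ) = 1)
  rw [show N * l - r = aN * l + (l - r) + l by rw [hN, add_mul]; omega]
  exact first_return_fract_mul_of_mul_sub_mul_eq_one hdetℤ ht hts hs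

/-- For an irrational rotation `T_α` with `α > k/l`, where `k/l = p_m/q_m` is an
even-index convergent of the continued fraction of `α`, the first point of the
orbit of `x` under `T_α` lying in the (open) arc `(x, T_α^l(x))` is `T_α^{Nl-r}(x)`
with `N = a_{m+1} + 2`, where `r ∈ (0,l)` satisfies `kr ≡ 1 (mod l)`. Membership
of `x + jα` in the arc is expressed via fractional parts, by translation
invariance: `0 < fract(jα) < fract(lα)`. -/
theorem stmt7 (α : ℝ) (hirr : Irrational α) (h0 : 0 < α) (h1 : α < 1)
    (m : ℕ) (hmeven : Even m) (k l r aN N : ℕ)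
    (hl : 0 < l) (hql : ((l : ℝ)) = (GenContFract.of α).dens m)
    (hconv : (GenContFract.of α).convs m = (k : ℝ) / l)
    (hgt : (k : ℝ) / l < α)
    (ha : (GenContFract.of α).partDens.get? m = some (aN : ℝ))
    (hr : 0 < r) (hrl : r < l) (hmod : (k * r) % l = 1 % l)
    (hN : N = aN + 2) :
    (0 < Int.fract (((N * l - r : ℕ) : ℝ) * α) ∧
      Int.fract (((N * l - r : ℕ) : ℝ) * α) < Int.fract ((l : ℝ) * α)) ∧
    ∀ j : ℕ, 0 < j → j < N * l - r →
      ¬ (0 < Int.fract ((j : ℝ) * α) ∧ Int.fract ((j : ℝ) * α) < Int.fract ((l : ℝ) * α)) :=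
  stmt7_general α hirr m hmeven k l r aN N hql hconv ha hr hrl hmod hN
end

section
/- Let f be an orientation-preserving circle homeomorphism with rotation number k/l (irreducible), and suppose the orbit of 0 under f is periodic of period l. Then the points of this orbit are cyclically ordered on the circle like the orbit of 0 under the rotation x ↦ x + k/l; in particular, the closest point of the orbit to the right of 0 is f^r(0), where r is the unique integer with 0 < r < l and kr ≡ 1 (mod l). -/
/-!
For every `e`, the lift `G = F^e` commutes with integer translations and `G^l(0) = e k`; for a
monotone degree-one lift, `G(0) < m` holds iff `G^l(0) < l m`. So `F^e(0)` lies on the same side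
of every integer as `e k / l`, and applying the strictly monotone `F^j` gives
`F^i(0) < F^j(0) + m` iff `i k / l < j k / l + m`. Hence the fractional parts along the orbit are
ordered like those of the rotation orbit, that is, like the residues `i k mod l`. Since `r`
inverts `k` mod `l`, multiplication by `k` permutes the residues, and the smallest nonzero
residue `1` is attained only at `i = r`.
-/

theorem Int.fract_lt_fract_iff_of_lt_intCast_iff {α : Type*} [Ring α] [LinearOrder α]
    [IsStrictOrderedRing α] [FloorRing α] {a b c d : α}
    (ha : ∀ m : ℤ, a < m ↔ c < m) (hb : ∀ m : ℤ, b < m ↔ d < m)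
    (hab : ∀ m : ℤ, a < b + m ↔ c < d + m) :
    Int.fract a < Int.fract b ↔ Int.fract c < Int.fract d := by
  have hac : ⌊a⌋ = ⌊c⌋ := eq_of_forall_gt_iff fun m => by rw [Int.floor_lt, Int.floor_lt, ha]
  have hbd : ⌊b⌋ = ⌊d⌋ := eq_of_forall_gt_iff fun m => by rw [Int.floor_lt, Int.floor_lt, hb]
  have hsub : ∀ x y : α, ∀ u v : ℤ, x - u < y - v ↔ x < y + ↑(u - v) := fun x y u v => by
    rw [sub_lt_iff_lt_add, Int.cast_sub, sub_add_eq_add_sub, ← add_sub_assoc]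
  rw [← Int.self_sub_floor, ← Int.self_sub_floor, ← Int.self_sub_floor c,
    ← Int.self_sub_floor d, hac, hbd, hsub, hsub, hab]

theorem Int.eq_of_mul_modEq_mul_of_mul_modEq_one {a b k r l : ℤ} (hkr : k * r ≡ 1 [ZMOD l])
    (ha : 0 ≤ a) (hal : a < l) (hb : 0 ≤ b) (hbl : b < l) (h : a * k ≡ b * k [ZMOD l]) :
    a = b := by
  have hab : a ≡ b [ZMOD l] := by
    calc a ≡ a * (k * r) [ZMOD l] := by simpa using (hkr.mul_left a).symm
      _ = a * k * r := by ring
      _ ≡ b * k * r [ZMOD l] := h.mul_right r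
      _ = b * (k * r) := by ring
      _ ≡ b [ZMOD l] := by simpa using hkr.mul_left b
  rwa [Int.ModEq, Int.emod_eq_of_lt ha hal, Int.emod_eq_of_lt hb hbl] at hab

theorem Int.emod_mul_lt_emod_mul_of_mul_modEq_one {k l r j : ℤ} (hkr : k * r ≡ 1 [ZMOD l])
    (hr : 0 < r) (hrl : r < l) (hj : 0 < j) (hjl : j < l) (hjr : j ≠ r) :
    r * k % l < j * k % l := by
  have hrk : r * k % l = 1 := by
    rw [mul_comm, show k * r % l = 1 % l from hkr, Int.emod_eq_of_lt zero_le_one (by omega)]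
  have hne_zero : j * k % l ≠ 0 := fun h => hj.ne' <|
    Int.eq_of_mul_modEq_mul_of_mul_modEq_one hkr hj.le hjl le_rfl (by omega)
      (by rw [Int.ModEq, h, zero_mul, Int.zero_emod])
  have hne_one : j * k % l ≠ 1 := fun h => hjr <|
    Int.eq_of_mul_modEq_mul_of_mul_modEq_one hkr hj.le hjl hr.le hrl (h.trans hrk.symm)
  have := Int.emod_nonneg (j * k) (by omega : l ≠ 0)
  omega

namespace CircleDeg1Lift

variable (f : CircleDeg1Lift) {N : ℕ} {p : ℤ}

theorem iterate_iterate_zero_of_iterate_zero_eq (hper : f^[N] 0 = p) (e : ℕ) :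
    (f^[e])^[N] 0 = e * p := by
  have h := (f ^ N).iterate_eq_of_map_eq_add_int (x := 0) (m := p)
    (by rw [coe_pow, hper, zero_add]) e
  rwa [coe_pow, ← Function.iterate_mul, mul_comm, Function.iterate_mul, zero_add] at h

theorem iterate_zero_lt_intCast_iff (hN : 0 < N) (hper : f^[N] 0 = p) (e : ℕ) (m : ℤ) :
    f^[e] 0 < m ↔ (e * p / N : ℝ) < m := by
  have h := (f ^ e).iterate_pos_lt_iff (x := 0) (m := m) hN
  rw [coe_pow, f.iterate_iterate_zero_of_iterate_zero_eq hper, zero_add, zero_add] at h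
  rw [← h, div_lt_iff₀ (by positivity), mul_comm (m : ℝ)]

theorem intCast_lt_iterate_zero_iff (hN : 0 < N) (hper : f^[N] 0 = p) (e : ℕ) (m : ℤ) :
    (m : ℝ) < f^[e] 0 ↔ (m : ℝ) < e * p / N := by
  have h := (f ^ e).lt_iterate_pos_iff (x := 0) (m := m) hN
  rw [coe_pow, f.iterate_iterate_zero_of_iterate_zero_eq hper, zero_add, zero_add] at h
  rw [← h, lt_div_iff₀ (by positivity), mul_comm (m : ℝ)]

theorem iterate_zero_lt_iterate_zero_add_intCast_iff (hf : StrictMono f) (hN : 0 < N)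
    (hper : f^[N] 0 = p) (i j : ℕ) (m : ℤ) :
    f^[i] 0 < f^[j] 0 + m ↔ (i * p / N : ℝ) < j * p / N + m := by
  have hcomm : ∀ n x, f^[n] (x + m) = f^[n] x + m := fun n x => by
    rw [← coe_pow, map_add_int]
  rcases le_total j i with hji | hij
  · obtain ⟨e, rfl⟩ := Nat.exists_eq_add_of_le hji
    rw [Function.iterate_add_apply, ← zero_add (m : ℝ), ← add_assoc, add_zero, ← hcomm,
      (hf.iterate j).lt_iff_lt, zero_add, f.iterate_zero_lt_intCast_iff hN hper, Nat.cast_add,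
      add_mul, add_div, add_lt_add_iff_left]
  · obtain ⟨e, rfl⟩ := Nat.exists_eq_add_of_le hij
    rw [Function.iterate_add_apply, ← hcomm, (hf.iterate i).lt_iff_lt,
      ← neg_lt_iff_pos_add, ← Int.cast_neg, f.intCast_lt_iterate_zero_iff hN hper, Nat.cast_add, add_mul, add_div, add_assoc,
      lt_add_iff_pos_right, Int.cast_neg, neg_lt_iff_pos_add]

theorem fract_iterate_zero_lt_fract_iff (hf : StrictMono f) (hN : 0 < N) (hper : f^[N] 0 = p)
    (i j : ℕ) :
    Int.fract (f^[i] 0) < Int.fract (f^[j] 0) ↔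
      Int.fract (i * p / N : ℝ) < Int.fract (j * p / N : ℝ) :=
  Int.fract_lt_fract_iff_of_lt_intCast_iff (f.iterate_zero_lt_intCast_iff hN hper i)
    (f.iterate_zero_lt_intCast_iff hN hper j)
    (f.iterate_zero_lt_iterate_zero_add_intCast_iff hf hN hper i j)

end CircleDeg1Lift

open Filter

theorem stmt14_general (F : ℝ → ℝ) (hm : StrictMono F)
    (hp : ∀ x, F (x + 1) = F x + 1)
    (k l r : ℤ) (hl : 0 < l)
    (hper : F^[l.toNat] 0 = (k : ℝ))
    (hr : 0 < r) (hrl : r < l) (hmod : k * r ≡ 1 [ZMOD l]) :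
    (∀ i j : ℕ, i < l.toNat → j < l.toNat →
        (Int.fract (F^[i] 0) < Int.fract (F^[j] 0) ↔
          Int.fract ((i : ℝ) * k / l) < Int.fract ((j : ℝ) * k / l))) ∧
    (∀ j : ℕ, 0 < j → j < l.toNat → (j : ℤ) ≠ r →
        Int.fract (F^[r.toNat] 0) < Int.fract (F^[j] 0)) := by
  obtain ⟨N, rfl⟩ := Int.eq_ofNat_of_zero_le hl.le
  obtain ⟨r, rfl⟩ := Int.eq_ofNat_of_zero_le hr.le
  rw [Int.toNat_natCast] at hper ⊢
  simp only [Int.cast_natCast]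
  have hN : 0 < N := by omega
  let f : CircleDeg1Lift := ⟨⟨F, hm.monotone⟩, hp⟩
  have horder (i j : ℕ) : Int.fract (F^[i] 0) < Int.fract (F^[j] 0) ↔
      Int.fract (i * k / N : ℝ) < Int.fract (j * k / N : ℝ) :=
    f.fract_iterate_zero_lt_fract_iff hm hN hper i j
  refine ⟨fun i j _ _ => horder i j, fun j hj hjN hjr => ?_⟩
  have hrot (n : ℕ) : Int.fract (n * k / N : ℝ) = ((n * k % N : ℤ) : ℝ) / N := by
    exact_mod_cast Int.fract_div_intCast_eq_div_intCast_mod (k := ℝ) (m := n * k) (n := N)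
  rw [horder, hrot, hrot, div_lt_div_iff_of_pos_right (Nat.cast_pos.mpr hN), Int.cast_lt]
  exact Int.emod_mul_lt_emod_mul_of_mul_modEq_one hmod (by omega) hrl (by omega) (by omega) hjr

/-- Let `f` be an orientation-preserving circle homeomorphism (given by a lift
`F`) with rotation number `k/l` (irreducible) whose orbit of `0` is periodic of
period `l` (so `F^l(0) = k`, with the `l` orbit points distinct on the circle).
Then the orbit points are cyclically ordered as the orbit of `0` under the
rotation `x ↦ x + k/l`; in particular the closest orbit point to the right of
`0` is `f^r(0)`, where `0 < r < l` and `kr ≡ 1 (mod l)`. Positions on the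
circle are expressed by fractional parts of lift orbit points. -/
theorem stmt14 (F : ℝ → ℝ) (hc : Continuous F) (hm : StrictMono F)
    (hp : ∀ x, F (x + 1) = F x + 1)
    (k l r : ℤ) (hl : 0 < l) (hk : 0 < k) (hkl : k < l) (hcop : IsCoprime k l)
    (hrot : Tendsto (fun n : ℕ => F^[n] 0 / n) atTop (nhds ((k : ℝ) / l)))
    (hper : F^[l.toNat] 0 = (k : ℝ))
    (hdistinct : ∀ j : ℕ, 0 < j → j < l.toNat → Int.fract (F^[j] 0) ≠ 0)
    (hr : 0 < r) (hrl : r < l) (hmod : k * r ≡ 1 [ZMOD l]) :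
    (∀ i j : ℕ, i < l.toNat → j < l.toNat →
        (Int.fract (F^[i] 0) < Int.fract (F^[j] 0) ↔
          Int.fract ((i : ℝ) * k / l) < Int.fract ((j : ℝ) * k / l))) ∧
    (∀ j : ℕ, 0 < j → j < l.toNat → (j : ℤ) ≠ r →
        Int.fract (F^[r.toNat] 0) < Int.fract (F^[j] 0)) :=
  stmt14_general F hm hp k l r hl hper hr hrl hmod
end
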